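/- arXiv:2502.06699 — 7 statements merged into one kernel-verified Lean document; each statement's English description precedes it below -/
import Mathlib

section
/- If a family F of subsets of [n], each of size at most k, satisfies |F| > r^k, then there exists a set X with 0 ≤ |X| < k such that the family F(X) = {F \ X : X ⊆ F, F ∈ F} is r-spread, i.e., for every set Y disjoint from X, |F(X ∪ Y)| ≤ r^{-|Y|}|F(X)|. -/
open Finset

/-- `restrict F X = F(X) = {F \ X : X ⊆ F, F ∈ F}`. -/
def restrict (F : Finset (Finset ℕ)) (X : Finset ℕ) : Finset (Finset ℕ) :=
  (F.filter fun A => X ⊆ A).image fun A => A \ X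

/-- A family `G` is `r`-spread if `|G(Z)| ≤ r^{-|Z|} |G|` for every set `Z`. -/
def IsSpread (r : ℝ) (G : Finset (Finset ℕ)) : Prop :=
  ∀ Z : Finset ℕ, ((restrict G Z).card : ℝ) ≤ (r ^ Z.card)⁻¹ * G.card

/-!
Choose `X` maximising the weight `r ^ |X| * |F(X)|`. Since `F(F(X))(Z) = F(X ∪ Z)` for `Z`
disjoint from `X` (and is empty otherwise), maximality is exactly the statement that `F(X)` is
`r`-spread. The weight of `∅` is `|F| > r ^ k`, while a set of size `k` has `|F(X)| ≤ 1` and hence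
weight at most `r ^ k`; so the maximiser has fewer than `k` elements.
-/

section Restrict

variable {F : Finset (Finset ℕ)} {X Z B : Finset ℕ}

lemma mem_restrict : B ∈ restrict F X ↔ ∃ A ∈ F, X ⊆ A ∧ A \ X = B := by
  simp only [_root_.restrict, mem_image, mem_filter, and_assoc]

lemma restrict_empty : restrict F ∅ = F := by
  simp [_root_.restrict]

lemma exists_superset_of_restrict_nonempty (h : (restrict F X).Nonempty) : ∃ A ∈ F, X ⊆ A := by
  obtain ⟨B, hB⟩ := h
  obtain ⟨A, hA, hXA, -⟩ := mem_restrict.1 hB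
  exact ⟨A, hA, hXA⟩

lemma restrict_restrict (h : Disjoint Z X) : restrict (restrict F X) Z = restrict F (X ∪ Z) := by
  ext B
  simp only [mem_restrict]
  constructor
  · rintro ⟨C, ⟨A, hA, hXA, rfl⟩, hZC, rfl⟩
    refine ⟨A, hA, union_subset hXA (hZC.trans sdiff_subset), ?_⟩
    rw [sdiff_sdiff_left, sup_eq_union]
  · rintro ⟨A, hA, hXZA, rfl⟩
    refine ⟨A \ X, ⟨A, hA, subset_union_left.trans hXZA, rfl⟩, ?_, by rw [sdiff_sdiff_left, sup_eq_union]⟩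
    exact subset_sdiff.2 ⟨subset_union_right.trans hXZA, h⟩

lemma restrict_restrict_of_not_disjoint (h : ¬Disjoint Z X) : restrict (restrict F X) Z = ∅ := by
  refine eq_empty_iff_forall_notMem.2 fun B hB => h ?_
  obtain ⟨C, hC, hZC, -⟩ := mem_restrict.1 hB
  obtain ⟨A, -, -, rfl⟩ := mem_restrict.1 hC
  exact (subset_sdiff.1 hZC).2

lemma card_restrict_le_one (hF : ∀ A ∈ F, A.card ≤ X.card) : (restrict F X).card ≤ 1 := by
  refine card_le_one.2 fun B hB C hC => ?_
  obtain ⟨A, hA, hXA, rfl⟩ := mem_restrict.1 hB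
  obtain ⟨A', hA', hXA', rfl⟩ := mem_restrict.1 hC
  rw [(eq_of_subset_of_card_le hXA (hF A hA)).symm, (eq_of_subset_of_card_le hXA' (hF A' hA')).symm]

end Restrict

def spreadWeight (r : ℝ) (F : Finset (Finset ℕ)) (X : Finset ℕ) : ℝ :=
  r ^ X.card * (restrict F X).card

section SpreadWeight

variable {r : ℝ} {F : Finset (Finset ℕ)} {X : Finset ℕ}

lemma spreadWeight_empty : spreadWeight r F ∅ = F.card := by
  simp [spreadWeight, restrict_empty]

lemma spreadWeight_nonneg (hr : 0 ≤ r) : 0 ≤ spreadWeight r F X := by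
  unfold spreadWeight
  positivity

lemma exists_forall_spreadWeight_le (hr : 0 ≤ r) (F : Finset (Finset ℕ)) :
    ∃ X, ∀ Y, spreadWeight r F Y ≤ spreadWeight r F X := by
  classical
  -- only subsets of members of `F` have nonzero weight
  set C := insert ∅ (F.biUnion powerset)
  obtain ⟨X, -, hX⟩ := C.exists_max_image (spreadWeight r F) (insert_nonempty _ _)
  refine ⟨X, fun Y => ?_⟩
  by_cases hY : Y ∈ C
  · exact hX Y hY
  · have : restrict F Y = ∅ := by
      by_contra hne
      obtain ⟨A, hA, hYA⟩ := exists_superset_of_restrict_nonempty (nonempty_iff_ne_empty.2 hne)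
      exact hY (mem_insert_of_mem (mem_biUnion.2 ⟨A, hA, mem_powerset.2 hYA⟩))
    simpa [spreadWeight, this] using spreadWeight_nonneg hr

lemma isSpread_restrict_of_forall_spreadWeight_le (hr : 0 < r)
    (hX : ∀ Y, spreadWeight r F Y ≤ spreadWeight r F X) : IsSpread r (restrict F X) := by
  intro Z
  by_cases hZX : Disjoint Z X
  · have hmax := hX (X ∪ Z)
    rw [spreadWeight, spreadWeight, card_union_of_disjoint hZX.symm, pow_add, mul_assoc] at hmax
    rw [restrict_restrict hZX, inv_mul_eq_div, le_div_iff₀ (by positivity), mul_comm]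
    exact le_of_mul_le_mul_left hmax (by positivity)
  · rw [restrict_restrict_of_not_disjoint hZX, card_empty, Nat.cast_zero]
    positivity

lemma card_lt_of_forall_spreadWeight_le {k : ℕ} (hr : 0 ≤ r) (hF : ∀ A ∈ F, A.card ≤ k)
    (hlarge : r ^ k < F.card) (hX : ∀ Y, spreadWeight r F Y ≤ spreadWeight r F X) :
    X.card < k := by
  have hFX : (F.card : ℝ) ≤ spreadWeight r F X := spreadWeight_empty ▸ hX ∅
  have hne : (restrict F X).Nonempty := by
    by_contra hne
    rw [not_nonempty_iff_eq_empty] at hne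
    simp only [spreadWeight, hne, card_empty, Nat.cast_zero, mul_zero] at hFX
    linarith [pow_nonneg hr k]
  obtain ⟨A, hA, hXA⟩ := exists_superset_of_restrict_nonempty hne
  refine lt_of_le_of_ne ((card_le_card hXA).trans (hF A hA)) fun hXk => ?_
  have hle : spreadWeight r F X ≤ r ^ k := by
    have := card_restrict_le_one fun A hA => hXk ▸ hF A hA
    rw [spreadWeight, hXk]
    exact mul_le_of_le_one_right (pow_nonneg hr k) (by exact_mod_cast this)
  linarith

end SpreadWeight

theorem stmt0 (n k : ℕ) (r : ℝ) (hr : 1 < r) (F : Finset (Finset ℕ))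
    (hF : ∀ A ∈ F, A ⊆ Finset.range n ∧ A.card ≤ k)
    (hlarge : r ^ k < (F.card : ℝ)) :
    ∃ X : Finset ℕ, X.card < k ∧ IsSpread r (restrict F X) := by
  have hr0 : 0 < r := zero_lt_one.trans hr
  obtain ⟨X, hX⟩ := exists_forall_spreadWeight_le hr0.le F
  exact ⟨X, card_lt_of_forall_spreadWeight_le hr0.le (fun A hA => (hF A hA).2) hlarge hX,
    isSpread_restrict_of_forall_spreadWeight_le hr0 hX⟩
end

section
/- Let F be a family of 3-element subsets of [6] such that one cannot find 3 sets in F with pairwise intersections of size at most 1 (i.e., ν(F,2) ≤ 2). Then |F| ≤ 10. -/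
/-!
If `F` contains no complementary pair `P`, `Q = [6] \ P`, it holds at most one triple from each
of the `10` such pairs. If it contains one, every other member meets `P` in two points and `Q` in
one, or vice versa. Two members of the first kind sharing at most one point would form, with `Q`,
three sets with pairwise intersections of size at most one; so these members pairwise share two
points, hence pairwise agree on their trace on `P` or on `Q`. They form a clique of the rook's
graph on (2-subsets of `P`) × `Q`, which has at most `3` vertices. So `|F| ≤ 1 + 1 + 3 + 3`.
-/

open Finset

variable {α ι β γ : Type*} [DecidableEq α]

theorem card_le_max_of_forall_eq_or_eq {S : Finset ι} {s : Finset β} {t : Finset γ}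
    {f : ι → β} {g : ι → γ} (hf : ∀ x ∈ S, f x ∈ s) (hg : ∀ x ∈ S, g x ∈ t)
    (hinj : ∀ x ∈ S, ∀ y ∈ S, f x = f y → g x = g y → x = y)
    (h : ∀ x ∈ S, ∀ y ∈ S, f x = f y ∨ g x = g y) : #S ≤ max #s #t := by
  by_cases hfconst : ∀ x ∈ S, ∀ y ∈ S, f x = f y
  · exact le_max_of_le_right <| card_le_card_of_injOn g hg
      fun x hx y hy hxy => hinj x hx y hy (hfconst x hx y hy) hxy
  push Not at hfconst
  obtain ⟨a, ha, b, hb, hab⟩ := hfconst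
  have hgconst : ∀ x ∈ S, g x = g a := by
    intro x hx
    rcases h x hx a ha with hxa | hxa
    · have hxb := (h x hx b hb).resolve_left fun hxb => hab (hxa.symm.trans hxb)
      exact hxb.trans ((h a ha b hb).resolve_left hab).symm
    · exact hxa
  exact le_max_of_le_left <| card_le_card_of_injOn f hf
    fun x hx y hy hxy => hinj x hx y hy hxy ((hgconst x hx).trans (hgconst y hy).symm)

theorem exists_mem_sdiff_mem {I : Finset α} {k : ℕ} (hI : #I = 2 * k)
    {F : Finset (Finset α)} (hF : ∀ A ∈ F, A ⊆ I ∧ #A = k) (hcard : (2 * k).choose k < 2 * #F) :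
    ∃ P ∈ F, I \ P ∈ F := by
  have hFsub : F ⊆ I.powersetCard k := fun A hA => mem_powersetCard.mpr (hF A hA)
  have hcompl : F.image (I \ ·) ⊆ I.powersetCard k := by
    simp only [image_subset_iff, mem_powersetCard]
    intro A hA
    rw [card_sdiff_of_subset (hF A hA).1, hI, (hF A hA).2]
    exact ⟨sdiff_subset, by omega⟩
  have hinj : #(F.image (I \ ·)) = #F := card_image_of_injOn fun A hA B hB hAB => by
    rw [← Finset.sdiff_sdiff_eq_self (hF A hA).1, ← Finset.sdiff_sdiff_eq_self (hF B hB).1]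
    exact congrArg (I \ ·) hAB
  obtain ⟨A, hA⟩ := inter_nonempty_of_card_lt_card_add_card hFsub hcompl
    (by rw [card_powersetCard, hI, hinj]; omega)
  obtain ⟨hAF, hAimg⟩ := mem_inter.mp hA
  obtain ⟨P, hP, rfl⟩ := mem_image.mp hAimg
  exact ⟨P, hP, hAF⟩

theorem card_inter_add_card_inter_of_subset_union {C P Q : Finset α} (hC : C ⊆ P ∪ Q)
    (hPQ : Disjoint P Q) : #(C ∩ P) + #(C ∩ Q) = #C := by
  rw [← card_union_of_disjoint (hPQ.mono inter_subset_right inter_subset_right),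
    ← inter_union_distrib_left, inter_eq_left.mpr hC]

theorem card_inter_lt_of_card_eq_of_ne {s t : Finset α} (hst : #s = #t) (hne : s ≠ t) :
    #(s ∩ t) < #s := by
  refine card_lt_card (ssubset_of_subset_of_ne inter_subset_left fun h => hne ?_)
  rw [← h, eq_of_subset_of_card_le inter_subset_right (by rw [h, hst])]

theorem eq_of_card_inter_eq_card {C P : Finset α} (hCP : #(C ∩ P) = #C) (hPC : #P ≤ #C) :
    C = P :=
  eq_of_subset_of_card_le (inter_eq_left.mp (eq_of_subset_of_card_le inter_subset_left hCP.ge))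
    hPC

section Traces

variable {P Q : Finset α}

theorem inter_eq_or_inter_eq_of_two_le_card_inter (hPQ : Disjoint P Q) {C D : Finset α}
    (hC : C ⊆ P ∪ Q ∧ #(C ∩ P) = 2 ∧ #(C ∩ Q) = 1)
    (hD : D ⊆ P ∪ Q ∧ #(D ∩ P) = 2 ∧ #(D ∩ Q) = 1) (hCD : 2 ≤ #(C ∩ D)) :
    C ∩ P = D ∩ P ∨ C ∩ Q = D ∩ Q := by
  by_contra! hne
  have hP := card_inter_lt_of_card_eq_of_ne (hC.2.1.trans hD.2.1.symm) hne.1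
  have hQ := card_inter_lt_of_card_eq_of_ne (hC.2.2.trans hD.2.2.symm) hne.2
  have hsplit := card_inter_add_card_inter_of_subset_union
    (inter_subset_left.trans hC.1 : C ∩ D ⊆ P ∪ Q) hPQ
  rw [inter_inter_distrib_right, inter_inter_distrib_right C D Q] at hsplit
  omega

theorem card_le_max_of_pairwise_two_le_card_inter (hPQ : Disjoint P Q) {S : Finset (Finset α)}
    (hS : ∀ C ∈ S, C ⊆ P ∪ Q ∧ #(C ∩ P) = 2 ∧ #(C ∩ Q) = 1)
    (hpair : (S : Set (Finset α)).Pairwise fun C D => 2 ≤ #(C ∩ D)) :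
    #S ≤ max #(P.powersetCard 2) #(Q.powersetCard 1) := by
  refine card_le_max_of_forall_eq_or_eq (f := (· ∩ P)) (g := (· ∩ Q))
    (fun C hC => mem_powersetCard.mpr ⟨inter_subset_right, (hS C hC).2.1⟩)
    (fun C hC => mem_powersetCard.mpr ⟨inter_subset_right, (hS C hC).2.2⟩) ?_ ?_
  · intro C hC D hD hP hQ
    rw [← inter_eq_left.mpr (hS C hC).1, ← inter_eq_left.mpr (hS D hD).1,
      inter_union_distrib_left, inter_union_distrib_left, hP, hQ]
  · intro C hC D hD
    by_cases hCD : C = D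
    · exact Or.inl (congrArg (· ∩ P) hCD)
    exact inter_eq_or_inter_eq_of_two_le_card_inter hPQ (hS C hC) (hS D hD) (hpair hC hD hCD)

theorem card_le_three_of_card_inter_eq_two {F : Finset (Finset α)}
    (hnu : ∀ G ⊆ F, (G : Set (Finset α)).Pairwise (fun A B => #(A ∩ B) ≤ 1) → #G ≤ 2)
    (hPQ : Disjoint P Q) (hP : #P = 3) (hQ : #Q = 3) (hQF : Q ∈ F)
    {S : Finset (Finset α)} (hSF : S ⊆ F)
    (hS : ∀ C ∈ S, C ⊆ P ∪ Q ∧ #(C ∩ P) = 2 ∧ #(C ∩ Q) = 1) : #S ≤ 3 := by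
  by_cases hpair : (S : Set (Finset α)).Pairwise fun C D => 2 ≤ #(C ∩ D)
  · simpa [hP, hQ] using card_le_max_of_pairwise_two_le_card_inter hPQ hS hpair
  exfalso
  obtain ⟨C, hC, D, hD, hCD, hsmall⟩ : ∃ C ∈ S, ∃ D ∈ S, C ≠ D ∧ #(C ∩ D) ≤ 1 := by
    simpa [Set.Pairwise] using hpair
  have hQC : Q ≠ C := fun h => by simpa [← h, hQ] using (hS C hC).2.2
  have hQD : Q ≠ D := fun h => by simpa [← h, hQ] using (hS D hD).2.2
  have hsparse : (({Q, C, D} : Finset (Finset α)) : Set (Finset α)).Pairwise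
      fun A B => #(A ∩ B) ≤ 1 := by
    have hQB : ∀ B ∈ S, #(Q ∩ B) ≤ 1 ∧ #(B ∩ Q) ≤ 1 := fun B hB => by
      rw [inter_comm, and_self, (hS B hB).2.2]
    rw [coe_insert, coe_pair, Set.pairwise_insert, Set.pairwise_pair]
    refine ⟨fun _ => ⟨hsmall, by rwa [inter_comm]⟩, ?_⟩
    rintro B (rfl | rfl) -
    exacts [hQB B hC, hQB B hD]
  have := hnu {Q, C, D} (by simp [insert_subset_iff, hQF, hSF hC, hSF hD]) hsparse
  rw [card_insert_of_notMem (by simp [hQC, hQD]), card_pair hCD] at this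
  omega

end Traces

theorem card_le_eight_of_sdiff_mem {I : Finset α} {F : Finset (Finset α)}
    (hF : ∀ A ∈ F, A ⊆ I ∧ #A = 3)
    (hnu : ∀ G ⊆ F, (G : Set (Finset α)).Pairwise (fun A B => #(A ∩ B) ≤ 1) → #G ≤ 2)
    {P : Finset α} (hP : P ∈ F) (hQ : I \ P ∈ F) : #F ≤ 8 := by
  set Q := I \ P
  have hPQ : Disjoint P Q := disjoint_sdiff
  have hPQI : P ∪ Q = I := union_sdiff_of_subset (hF P hP).1
  have hPc : #P = 3 := (hF P hP).2
  have hQc : #Q = 3 := (hF Q hQ).2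
  have hsplit : ∀ C ∈ F, C ⊆ P ∪ Q ∧ #(C ∩ P) + #(C ∩ Q) = 3 := fun C hC => by
    have hCI : C ⊆ P ∪ Q := hPQI ▸ (hF C hC).1
    exact ⟨hCI, (card_inter_add_card_inter_of_subset_union hCI hPQ).trans (hF C hC).2⟩
  have hmaps : (F : Set (Finset α)).MapsTo (fun C => #(C ∩ P)) (range 4) := fun C _ => by
    simpa [Nat.lt_succ_iff, hPc] using card_le_card (inter_subset_right (s₁ := C) (s₂ := P))
  rw [card_eq_sum_card_fiberwise hmaps]
  simp only [sum_range_succ, sum_range_zero, zero_add]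
  have h0 : #{C ∈ F | #(C ∩ P) = 0} ≤ 1 := by
    have hQ' : ∀ C ∈ {C ∈ F | #(C ∩ P) = 0}, C = Q := fun C hC => by
      obtain ⟨hCF, hC0⟩ := mem_filter.mp hC
      have := (hsplit C hCF).2
      exact eq_of_card_inter_eq_card (by rw [(hF C hCF).2]; omega) (by rw [hQc, (hF C hCF).2])
    exact card_le_one.mpr fun C hC D hD => (hQ' C hC).trans (hQ' D hD).symm
  have h1 : #{C ∈ F | #(C ∩ P) = 1} ≤ 3 := by
    refine card_le_three_of_card_inter_eq_two hnu hPQ.symm hQc hPc hP (filter_subset _ _)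
      fun C hC => ?_
    obtain ⟨hCF, hC1⟩ := mem_filter.mp hC
    obtain ⟨hCPQ, hCsplit⟩ := hsplit C hCF
    exact ⟨union_comm P Q ▸ hCPQ, by omega, hC1⟩
  have h2 : #{C ∈ F | #(C ∩ P) = 2} ≤ 3 := by
    refine card_le_three_of_card_inter_eq_two hnu hPQ hPc hQc hQ (filter_subset _ _)
      fun C hC => ?_
    obtain ⟨hCF, hC2⟩ := mem_filter.mp hC
    obtain ⟨hCPQ, hCsplit⟩ := hsplit C hCF
    exact ⟨hCPQ, hC2, by omega⟩
  have h3 : #{C ∈ F | #(C ∩ P) = 3} ≤ 1 := by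
    have hP' : ∀ C ∈ {C ∈ F | #(C ∩ P) = 3}, C = P := fun C hC => by
      obtain ⟨hCF, hC3⟩ := mem_filter.mp hC
      exact eq_of_card_inter_eq_card (by rw [(hF C hCF).2, hC3]) (by rw [hPc, (hF C hCF).2])
    exact card_le_one.mpr fun C hC D hD => (hP' C hC).trans (hP' D hD).symm
  omega

theorem stmt2 (F : Finset (Finset ℕ))
    (hF : ∀ A ∈ F, A ⊆ Finset.Icc 1 6 ∧ A.card = 3)
    (hnu : ∀ G ⊆ F,
      (∀ A ∈ G, ∀ B ∈ G, A ≠ B → (A ∩ B).card ≤ 1) → G.card ≤ 2) :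
    F.card ≤ 10 := by
  by_contra! hF10
  obtain ⟨P, hP, hQ⟩ := exists_mem_sdiff_mem (k := 3) (by simp) hF (by simp [Nat.choose]; omega)
  have := card_le_eight_of_sdiff_mem hF hnu hP hQ
  omega
end

section
/- Let F be a family of 3-element subsets of [6] such that one cannot find 4 sets in F with pairwise intersections of size at most 1 (i.e., ν(F,2) ≤ 3). Then |F| ≤ 14. -/
/-!
Let `M` be the set of triples of `[6]` missing from `F`; if `|F| ≥ 15` then `|M| ≤ 5`, and `M` must
meet each of the 30 four-element packings of triples. Every triple lies in exactly 6 of them, so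
double counting forces `|M| = 5` with every packing containing exactly one element of `M`. Two
triples meeting in one point always lie in a common packing, so the triples of `M` pairwise meet in
0 or 2 points, and no five triples of `[6]` do that.
-/

open Finset

section HittingSets

variable {α : Type*} [DecidableEq α] {s : Finset α} {B : Finset (Finset α)} {n : ℕ}

lemma card_le_card_mul_of_forall_inter_nonempty (hdeg : ∀ a ∈ s, #{t ∈ B | a ∈ t} ≤ n)
    (hhit : ∀ t ∈ B, (s ∩ t).Nonempty) : #B ≤ #s * n :=
  calc #B = ∑ _t ∈ B, 1 := card_eq_sum_ones B
    _ ≤ ∑ t ∈ B, #(s ∩ t) := sum_le_sum fun t ht => card_pos.2 (hhit t ht)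
    _ ≤ #s * n := sum_card_inter_le hdeg

lemma card_inter_eq_one_of_card_mul_le (hdeg : ∀ a ∈ s, #{t ∈ B | a ∈ t} ≤ n)
    (hhit : ∀ t ∈ B, (s ∩ t).Nonempty) (hs : #s * n ≤ #B) : ∀ t ∈ B, #(s ∩ t) = 1 := by
  have hpos : ∀ t ∈ B, 1 ≤ #(s ∩ t) := fun t ht => card_pos.2 (hhit t ht)
  have hsum : ∑ _t ∈ B, 1 = ∑ t ∈ B, #(s ∩ t) :=
    le_antisymm (sum_le_sum hpos)
      ((sum_card_inter_le hdeg).trans (hs.trans_eq (card_eq_sum_ones B)))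
  exact fun t ht => ((sum_eq_sum_iff_of_le hpos).1 hsum t ht).symm

end HittingSets

def triples : Finset (Finset ℕ) := (Icc 1 6).powersetCard 3

def fourPackings : Finset (Finset (Finset ℕ)) :=
  {Q ∈ triples.powersetCard 4 | ∀ A ∈ Q, ∀ B ∈ Q, A ≠ B → #(A ∩ B) ≤ 1}

lemma card_triples : #triples = 20 := by decide

lemma card_filter_mem_fourPackings : ∀ A ∈ triples, #{Q ∈ fourPackings | A ∈ Q} = 6 := by
  decide +kernel

lemma card_fourPackings : #fourPackings = 30 := by
  have hcount := sum_card_inter card_filter_mem_fourPackings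
  have hQ : ∀ Q ∈ fourPackings, #(triples ∩ Q) = 4 := fun Q hQ => by
    obtain ⟨hQT, hQ4⟩ := mem_powersetCard.1 (mem_filter.1 hQ).1
    rw [inter_eq_right.2 hQT, hQ4]
  rw [sum_congr rfl hQ, sum_const, card_triples, smul_eq_mul] at hcount
  omega

lemma exists_mem_fourPackings_of_card_inter_eq_one :
    ∀ A ∈ triples, ∀ B ∈ triples, #(A ∩ B) = 1 → ∃ Q ∈ fourPackings, A ∈ Q ∧ B ∈ Q := by
  decide +kernel

lemma card_filter_card_inter_ne_one_le_one :
    ∀ A ∈ triples, ∀ B ∈ triples, ∀ C ∈ triples, A ≠ B → A ≠ C → B ≠ C →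
      #(A ∩ B) ≠ 1 → #(A ∩ C) ≠ 1 → #(B ∩ C) ≠ 1 →
      #{D ∈ triples \ {A, B, C} | #(D ∩ A) ≠ 1 ∧ #(D ∩ B) ≠ 1 ∧ #(D ∩ C) ≠ 1} ≤ 1 := by
  decide +kernel

lemma card_le_four_of_card_inter_ne_one {M : Finset (Finset ℕ)} (hM : M ⊆ triples)
    (hne : ∀ A ∈ M, ∀ B ∈ M, A ≠ B → #(A ∩ B) ≠ 1) : #M ≤ 4 := by
  by_contra! h5
  obtain ⟨A, hA, B, hB, C, hC, hAB, hAC, hBC⟩ := two_lt_card.1 (by omega : 2 < #M)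
  have hrest : M \ {A, B, C} ⊆
      {D ∈ triples \ {A, B, C} | #(D ∩ A) ≠ 1 ∧ #(D ∩ B) ≠ 1 ∧ #(D ∩ C) ≠ 1} := by
    intro D hD
    obtain ⟨hDM, hDABC⟩ := mem_sdiff.1 hD
    simp only [mem_insert, mem_singleton, not_or] at hDABC
    exact mem_filter.2 ⟨sdiff_subset_sdiff hM subset_rfl hD,
      hne D hDM A hA hDABC.1, hne D hDM B hB hDABC.2.1, hne D hDM C hC hDABC.2.2⟩
  have hsize : #M - 3 ≤ #(M \ {A, B, C}) :=
    (Nat.sub_le_sub_left card_le_three _).trans (le_card_sdiff _ _)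
  have := (card_le_card hrest).trans <| card_filter_card_inter_ne_one_le_one A (hM hA) B (hM hB)
    C (hM hC) hAB hAC hBC (hne A hA B hB hAB) (hne A hA C hC hAC) (hne B hB C hC hBC)
  omega

lemma card_inter_ne_one_of_forall_card_inter_eq_one {M : Finset (Finset ℕ)} (hM : M ⊆ triples)
    (hexact : ∀ Q ∈ fourPackings, #(M ∩ Q) = 1) :
    ∀ A ∈ M, ∀ B ∈ M, A ≠ B → #(A ∩ B) ≠ 1 := by
  intro A hA B hB hAB h1
  obtain ⟨Q, hQ, hAQ, hBQ⟩ :=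
    exists_mem_fourPackings_of_card_inter_eq_one A (hM hA) B (hM hB) h1
  exact (one_lt_card.2 ⟨A, mem_inter.2 ⟨hA, hAQ⟩, B, mem_inter.2 ⟨hB, hBQ⟩, hAB⟩).ne'
    (hexact Q hQ)

lemma exists_mem_fourPackings_disjoint {M : Finset (Finset ℕ)} (hM : M ⊆ triples)
    (hcard : #M ≤ 5) : ∃ Q ∈ fourPackings, Disjoint M Q := by
  by_contra! hmeet
  have hhit : ∀ Q ∈ fourPackings, (M ∩ Q).Nonempty := fun Q hQ =>
    not_disjoint_iff_nonempty_inter.1 (hmeet Q hQ)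
  have hdeg : ∀ A ∈ M, #{Q ∈ fourPackings | A ∈ Q} ≤ 6 := fun A hA =>
    (card_filter_mem_fourPackings A (hM hA)).le
  have h5 := card_le_card_mul_of_forall_inter_nonempty hdeg hhit
  rw [card_fourPackings] at h5
  have hexact := card_inter_eq_one_of_card_mul_le hdeg hhit (by rw [card_fourPackings]; omega)
  have h4 := card_le_four_of_card_inter_ne_one hM
    (card_inter_ne_one_of_forall_card_inter_eq_one hM hexact)
  omega

theorem stmt3 (F : Finset (Finset ℕ))
    (hF : ∀ A ∈ F, A ⊆ Finset.Icc 1 6 ∧ A.card = 3)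
    (hnu : ∀ G ⊆ F,
      (∀ A ∈ G, ∀ B ∈ G, A ≠ B → (A ∩ B).card ≤ 1) → G.card ≤ 3) :
    F.card ≤ 14 := by
  by_contra! h15
  have hFT : F ⊆ triples := fun A hA => mem_powersetCard.2 (hF A hA)
  obtain ⟨Q, hQ, hdisj⟩ := exists_mem_fourPackings_disjoint (sdiff_subset : triples \ F ⊆ triples)
    (by rw [card_sdiff_of_subset hFT, card_triples]; omega)
  obtain ⟨hQT, hQ4⟩ := mem_powersetCard.1 (mem_filter.1 hQ).1
  have hQF : Q ⊆ F := fun A hA =>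
    by_contra fun hAF => disjoint_left.1 hdisj (mem_sdiff.2 ⟨hQT hA, hAF⟩) hA
  have := hnu Q hQF (mem_filter.1 hQ).2
  omega
end

section
/- Let r ≥ k ≥ 1 and s ≥ 1 be integers. Suppose F is a family of k-element subsets of [r] such that any s+1 distinct sets in F include two sets intersecting in at least k-1 elements (i.e., ν(F, k-1) ≤ s). Then |F| ≤ r·s. -/
/-!
Two distinct `k`-sets meeting in `k - 1` points differ by swapping a single element `a` for `b`,
so their element sums differ by `a - b`. Hence, if no two distinct points of the ground set are
congruent mod `r`, two distinct `k`-sets with the same element sum mod `r` meet in at most `k - 2`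
points. The `r` residue classes of the element sum thus split `F` into `r` families, each of
which has at most `s` members by the hypothesis on `F`.
-/

open Finset

namespace Finset

variable {α : Type*} [DecidableEq α]

lemma card_sdiff_eq_one_of_card_eq_of_sub_two_lt {A B : Finset α} (hcard : #A = #B)
    (hne : A ≠ B) (hlt : #A - 2 < #(A ∩ B)) : #(A \ B) = 1 := by
  have hsub : ¬ A ⊆ B := fun h => hne (eq_of_subset_of_card_le h hcard.ge)
  have hinter : #(A ∩ B) < #A := card_lt_card (inter_subset_left.ssubset_of_ne (mt inter_eq_left.mp hsub))
  have := card_sdiff_add_card_inter A B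
  omega

lemma card_inter_le_card_sub_two_of_sum_eq {M : Type*} [AddCancelCommMonoid M] {f : α → M}
    {A B : Finset α} (hf : Set.InjOn f ↑(A ∪ B)) (hcard : #A = #B) (hne : A ≠ B)
    (hsum : ∑ x ∈ A, f x = ∑ x ∈ B, f x) : #(A ∩ B) ≤ #A - 2 := by
  by_contra! hlt
  obtain ⟨a, ha⟩ := card_eq_one.mp (card_sdiff_eq_one_of_card_eq_of_sub_two_lt hcard hne hlt)
  obtain ⟨b, hb⟩ := card_eq_one.mp <| card_sdiff_eq_one_of_card_eq_of_sub_two_lt hcard.symm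
    hne.symm (by rwa [inter_comm, ← hcard])
  have haA : a ∈ A \ B := ha ▸ mem_singleton_self a
  have hbB : b ∈ B \ A := hb ▸ mem_singleton_self b
  have hfab : f a = f b := by
    rw [← sum_inter_add_sum_sdiff A B, ← sum_inter_add_sum_sdiff B A, ha, hb, inter_comm,
      sum_singleton, sum_singleton] at hsum
    exact add_left_cancel hsum
  have hab : a = b := hf (by simp [(mem_sdiff.mp haA).1]) (by simp [(mem_sdiff.mp hbB).1]) hfab
  exact (mem_sdiff.mp haA).2 (hab ▸ (mem_sdiff.mp hbB).1)

end Finset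

lemma injOn_natCast_zmod_Icc (r : ℕ) : Set.InjOn (Nat.cast : ℕ → ZMod r) ↑(Icc 1 r) := by
  intro a ha b hb hab
  simp only [coe_Icc, Set.mem_Icc] at ha hb
  refine ((ZMod.natCast_eq_natCast_iff a b r).mp hab).eq_of_abs_lt ?_
  rw [abs_lt]
  omega

theorem stmt4_general (r k s : ℕ) (hk : 1 ≤ k) (hkr : k ≤ r)
    (F : Finset (Finset ℕ))
    (hF : ∀ A ∈ F, A ⊆ Finset.Icc 1 r ∧ A.card = k)
    (hnu : ∀ G ⊆ F,
      (∀ A ∈ G, ∀ B ∈ G, A ≠ B → (A ∩ B).card ≤ k - 2) → G.card ≤ s) :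
    F.card ≤ r * s := by
  have : NeZero r := ⟨by omega⟩
  let residue (A : Finset ℕ) : ZMod r := ∑ a ∈ A, (a : ZMod r)
  have hclass (i : ZMod r) : #{A ∈ F | residue A = i} ≤ s := by
    refine hnu _ (filter_subset _ _) fun A hA B hB hne => ?_
    obtain ⟨hA, hAi⟩ := mem_filter.mp hA
    obtain ⟨hB, hBi⟩ := mem_filter.mp hB
    obtain ⟨hAr, hAk⟩ := hF A hA
    obtain ⟨hBr, hBk⟩ := hF B hB
    rw [← hAk]
    exact card_inter_le_card_sub_two_of_sum_eq
      ((injOn_natCast_zmod_Icc r).mono (coe_subset.mpr (union_subset hAr hBr)))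
      (hAk.trans hBk.symm) hne (hAi.trans hBi.symm)
  calc #F ≤ s * #(univ : Finset (ZMod r)) :=
        card_le_mul_card_image_of_maps_to (fun A _ => mem_univ (residue A)) s fun i _ => hclass i
    _ = r * s := by rw [card_univ, ZMod.card, mul_comm]

theorem stmt4 (r k s : ℕ) (hk : 1 ≤ k) (hkr : k ≤ r) (hs : 1 ≤ s)
    (F : Finset (Finset ℕ))
    (hF : ∀ A ∈ F, A ⊆ Finset.Icc 1 r ∧ A.card = k)
    (hnu : ∀ G ⊆ F,
      (∀ A ∈ G, ∀ B ∈ G, A ≠ B → (A ∩ B).card ≤ k - 2) → G.card ≤ s) :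
    F.card ≤ r * s :=
  stmt4_general r k s hk hkr F hF hnu
end

section
/- Let G' be a finite family of sets with ν(G', t₁) ≤ s for positive integers t₁, s. Then the number of unordered triples {A,B,C} ⊆ G' with |A∩B|, |B∩C|, |A∩C| ≥ t₁ is at least (s/3)·Σ_{A ∈ G'} C(d(A)/s, 2), where d(A) is the number of sets in G' intersecting A in at least t₁ elements, and C(x,2) := x(x-1)/2 for x > 1 and 0 for x ≤ 1. -/
/-!
In the intersection graph on `G'` (sets adjacent when they share at least `t₁` elements) every
independent set has at most `s` vertices, in particular inside each neighbourhood `N(A)`. Deleting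
a maximal independent set `I` (so `|I| ≤ s`, and every remaining vertex has a neighbour in `I`) and
inducting shows that such a graph on `n` vertices has `e` edges with `n² ≤ s (n + 2e)`, i.e.
`e ≥ s · C(n/s, 2)`. Inside `N(A)` the edges are the triangles through `A`, and summing over `A`
counts every triangle three times.
-/

open Finset

/-- `c2 x = C(x,2) = x(x-1)/2` for `x > 1` and `0` otherwise. -/
noncomputable def c2 (x : ℝ) : ℝ := if 1 < x then x * (x - 1) / 2 else 0

lemma mul_c2_div_le {d s e : ℕ} (h : d ^ 2 ≤ s * (d + 2 * e)) : (s : ℝ) * c2 (d / s) ≤ e := by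
  unfold c2
  split_ifs with hds
  · have hs : (0 : ℝ) < s := by
      rcases Nat.eq_zero_or_pos s with rfl | hs
      · norm_num at hds
      · exact_mod_cast hs
    have h' : (d : ℝ) ^ 2 ≤ s * (d + 2 * e) := by exact_mod_cast h
    rw [show (s : ℝ) * (d / s * (d / s - 1) / 2) = (d ^ 2 - s * d) / (2 * s) by field_simp,
      div_le_iff₀ (by positivity)]
    nlinarith
  · rw [mul_zero]
    positivity

namespace SimpleGraph

variable {α : Type*} [DecidableEq α] (G : SimpleGraph α) [DecidableRel G.Adj]

def cliqueFinsetOn (V : Finset α) (n : ℕ) : Finset (Finset α) :=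
  {S ∈ V.powerset | G.IsNClique n S}

variable {G}

@[simp]
lemma mem_cliqueFinsetOn {V S : Finset α} {n : ℕ} :
    S ∈ G.cliqueFinsetOn V n ↔ S ⊆ V ∧ G.IsNClique n S := by
  simp [cliqueFinsetOn]

lemma cliqueFinsetOn_mono {V W : Finset α} (h : W ⊆ V) (n : ℕ) :
    G.cliqueFinsetOn W n ⊆ G.cliqueFinsetOn V n :=
  filter_subset_filter _ (powerset_mono.2 h)

lemma exists_isIndepSet_forall_exists_adj (V : Finset α) :
    ∃ I ⊆ V, G.IsIndepSet I ∧ ∀ v ∈ V \ I, ∃ w ∈ I, G.Adj v w := by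
  obtain ⟨I, hI⟩ := exists_maximal
    (s := V.powerset.filter fun J : Finset α => G.IsIndepSet (J : Set α)) ⟨∅, by simp⟩
  obtain ⟨hIV, hIindep⟩ := mem_filter.1 hI.prop
  refine ⟨I, mem_powerset.1 hIV, hIindep, fun v hv => ?_⟩
  rw [mem_sdiff] at hv
  by_contra! hnonadj
  have hinsert : insert v I ∈ V.powerset.filter fun J : Finset α => G.IsIndepSet (J : Set α) := by
    rw [mem_filter, mem_powerset, coe_insert]
    exact ⟨insert_subset hv.1 (mem_powerset.1 hIV),
      hIindep.insert fun w hw _ => ⟨hnonadj w hw, fun h => hnonadj w hw h.symm⟩⟩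
  exact hv.2 (hI.eq_of_ge hinsert (subset_insert v I) ▸ mem_insert_self v I)

lemma card_sdiff_add_card_cliqueFinsetOn_sdiff_le {V I : Finset α} (hIV : I ⊆ V)
    (hdom : ∀ v ∈ V \ I, ∃ w ∈ I, G.Adj v w) :
    #(V \ I) + #(G.cliqueFinsetOn (V \ I) 2) ≤ #(G.cliqueFinsetOn V 2) := by
  choose! w hwI hadj using hdom
  have hinj : Set.InjOn (fun v => ({v, w v} : Finset α)) ↑(V \ I) := by
    intro u hu v hv huv
    have huv : ({u, w u} : Finset α) = {v, w v} := huv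
    have : u ∈ ({v, w v} : Finset α) := huv ▸ mem_insert_self u {w u}
    rcases mem_insert.1 this with h | h
    · exact h
    · exact absurd (mem_singleton.1 h ▸ hwI v hv) (mem_sdiff.1 hu).2
  have hdisj : Disjoint ((V \ I).image fun v => ({v, w v} : Finset α))
      (G.cliqueFinsetOn (V \ I) 2) := by
    refine Finset.disjoint_left.2 fun S hS hS' => ?_
    obtain ⟨v, hv, rfl⟩ := mem_image.1 hS
    exact (mem_sdiff.1 ((mem_cliqueFinsetOn.1 hS').1 (by simp))).2 (hwI v hv)
  have hsub : (V \ I).image (fun v => ({v, w v} : Finset α)) ∪ G.cliqueFinsetOn (V \ I) 2 ⊆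
      G.cliqueFinsetOn V 2 := by
    refine union_subset (fun S hS => ?_) (cliqueFinsetOn_mono sdiff_subset 2)
    obtain ⟨v, hv, rfl⟩ := mem_image.1 hS
    refine mem_cliqueFinsetOn.2 ⟨?_, ⟨?_, card_pair (hadj v hv).ne⟩⟩
    · exact insert_subset (mem_sdiff.1 hv).1 (singleton_subset_iff.2 (hIV (hwI v hv)))
    · rw [coe_pair]
      exact isClique_pair.2 fun _ => hadj v hv
  calc #(V \ I) + #(G.cliqueFinsetOn (V \ I) 2)
      = #((V \ I).image fun v => ({v, w v} : Finset α)) + #(G.cliqueFinsetOn (V \ I) 2) := by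
        rw [card_image_of_injOn hinj]
    _ = #((V \ I).image (fun v => ({v, w v} : Finset α)) ∪ G.cliqueFinsetOn (V \ I) 2) :=
        (card_union_of_disjoint hdisj).symm
    _ ≤ #(G.cliqueFinsetOn V 2) := card_le_card hsub

theorem sq_card_le_of_isIndepSet_card_le {s : ℕ} {V : Finset α}
    (hind : ∀ I ⊆ V, G.IsIndepSet I → #I ≤ s) :
    #V ^ 2 ≤ s * (#V + 2 * #(G.cliqueFinsetOn V 2)) := by
  induction V using Finset.strongInduction with
  | H V ih =>
  rcases V.eq_empty_or_nonempty with rfl | ⟨v, hv⟩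
  · simp
  obtain ⟨I, hIV, hIindep, hdom⟩ := exists_isIndepSet_forall_exists_adj (G := G) V
  have hI : I.Nonempty := by
    by_cases hvI : v ∈ I
    · exact ⟨v, hvI⟩
    · obtain ⟨w, hw, -⟩ := hdom v (mem_sdiff.2 ⟨hv, hvI⟩)
      exact ⟨w, hw⟩
  have hrest := ih (V \ I) (sdiff_ssubset hIV hI) fun J hJ => hind J (hJ.trans sdiff_subset)
  have hedges := card_sdiff_add_card_cliqueFinsetOn_sdiff_le hIV hdom
  have hIs := hind I hIV hIindep
  rw [← card_sdiff_add_card_eq_card hIV]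
  nlinarith [Nat.mul_le_mul_right (2 * #(V \ I) + #I) hIs]

lemma card_filter_mem_cliqueFinsetOn_succ {V : Finset α} {a : α} (ha : a ∈ V) (n : ℕ) :
    #{S ∈ G.cliqueFinsetOn V (n + 1) | a ∈ S} = #(G.cliqueFinsetOn {b ∈ V | G.Adj a b} n) := by
  symm
  refine card_nbij' (insert a) (·.erase a) (fun S hS => ?_) (fun T hT => ?_) (fun S hS => ?_)
    fun T hT => ?_
  · obtain ⟨hSN, hS⟩ := mem_cliqueFinsetOn.1 hS
    refine mem_filter.2 ⟨mem_cliqueFinsetOn.2 ⟨insert_subset ha ?_, ?_⟩, mem_insert_self a S⟩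
    · exact hSN.trans (filter_subset _ V)
    · exact hS.insert fun b hb => (mem_filter.1 (hSN hb)).2
  · obtain ⟨hT, haT⟩ := mem_filter.1 hT
    obtain ⟨hTV, hT⟩ := mem_cliqueFinsetOn.1 hT
    refine mem_cliqueFinsetOn.2 ⟨fun b hb => mem_filter.2 ⟨hTV (mem_of_mem_erase hb), ?_⟩,
      hT.erase_of_mem haT⟩
    exact hT.isClique haT (mem_of_mem_erase hb) (ne_of_mem_erase hb).symm
  · obtain ⟨hSN, -⟩ := mem_cliqueFinsetOn.1 hS
    exact erase_insert fun haS => G.irrefl (mem_filter.1 (hSN haS)).2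
  · exact insert_erase (mem_filter.1 hT).2

lemma sum_card_cliqueFinsetOn_neighbors (V : Finset α) (n : ℕ) :
    ∑ a ∈ V, #(G.cliqueFinsetOn {b ∈ V | G.Adj a b} n) =
      (n + 1) * #(G.cliqueFinsetOn V (n + 1)) := by
  calc ∑ a ∈ V, #(G.cliqueFinsetOn {b ∈ V | G.Adj a b} n)
      = ∑ a ∈ V, #{S ∈ G.cliqueFinsetOn V (n + 1) | a ∈ S} :=
        sum_congr rfl fun a ha => (card_filter_mem_cliqueFinsetOn_succ ha n).symm
    _ = ∑ S ∈ G.cliqueFinsetOn V (n + 1), #{a ∈ V | a ∈ S} :=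
        sum_card_bipartiteAbove_eq_sum_card_bipartiteBelow (r := fun a S => a ∈ S)
    _ = ∑ S ∈ G.cliqueFinsetOn V (n + 1), (n + 1) := sum_congr rfl fun S hS => by
        obtain ⟨hSV, hS⟩ := mem_cliqueFinsetOn.1 hS
        rw [filter_mem_eq_inter, inter_eq_right.2 hSV, hS.card_eq]
    _ = (n + 1) * #(G.cliqueFinsetOn V (n + 1)) := by rw [sum_const, smul_eq_mul, mul_comm]

theorem mul_sum_c2_le_card_cliqueFinsetOn_three {s : ℕ} {V : Finset α}
    (hind : ∀ I ⊆ V, G.IsIndepSet I → #I ≤ s) :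
    ((s : ℝ) / 3) * ∑ a ∈ V, c2 ((#{b ∈ V | G.Adj a b} : ℝ) / s) ≤
      #(G.cliqueFinsetOn V 3) := by
  have hlocal (a : α) : (s : ℝ) * c2 ((#{b ∈ V | G.Adj a b} : ℝ) / s) ≤
      #(G.cliqueFinsetOn {b ∈ V | G.Adj a b} 2) :=
    mul_c2_div_le <| sq_card_le_of_isIndepSet_card_le fun I hI =>
      hind I (hI.trans (filter_subset _ V))
  have hcount : ∑ a ∈ V, (#(G.cliqueFinsetOn {b ∈ V | G.Adj a b} 2) : ℝ) =
      3 * #(G.cliqueFinsetOn V 3) := by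
    exact_mod_cast sum_card_cliqueFinsetOn_neighbors V 2
  calc ((s : ℝ) / 3) * ∑ a ∈ V, c2 ((#{b ∈ V | G.Adj a b} : ℝ) / s)
      = (∑ a ∈ V, (s : ℝ) * c2 ((#{b ∈ V | G.Adj a b} : ℝ) / s)) / 3 := by
        rw [← mul_sum]; ring
    _ ≤ (∑ a ∈ V, (#(G.cliqueFinsetOn {b ∈ V | G.Adj a b} 2) : ℝ)) / 3 := by
        gcongr with a
        exact hlocal a
    _ = #(G.cliqueFinsetOn V 3) := by rw [hcount]; ring

end SimpleGraph

variable {α : Type*} [DecidableEq α]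

def intersectionGraph (t : ℕ) : SimpleGraph (Finset α) where
  Adj A B := A ≠ B ∧ t ≤ #(A ∩ B)
  symm := ⟨fun A B h => ⟨h.1.symm, inter_comm A B ▸ h.2⟩⟩
  loopless := ⟨fun _ h => h.1 rfl⟩

@[simp]
lemma intersectionGraph_adj {t : ℕ} {A B : Finset α} :
    (intersectionGraph t).Adj A B ↔ A ≠ B ∧ t ≤ #(A ∩ B) :=
  Iff.rfl

instance (t : ℕ) : DecidableRel (intersectionGraph (α := α) t).Adj :=
  fun _ _ => decidable_of_iff' _ intersectionGraph_adj

theorem stmt7_general (t₁ s : ℕ) (G : Finset (Finset ℕ))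
    (hnu : ∀ H ⊆ G,
      (∀ A ∈ H, ∀ B ∈ H, A ≠ B → (A ∩ B).card < t₁) → H.card ≤ s) :
    ((s : ℝ) / 3) *
        ∑ A ∈ G, c2 (((G.filter fun B => B ≠ A ∧ t₁ ≤ (A ∩ B).card).card : ℝ) / s) ≤
      (((G.powersetCard 3).filter fun S =>
          ∀ A ∈ S, ∀ B ∈ S, A ≠ B → t₁ ≤ (A ∩ B).card).card : ℝ) := by
  have hind : ∀ I ⊆ G, (intersectionGraph t₁).IsIndepSet (I : Set (Finset ℕ)) → #I ≤ s :=
    fun I hIG hI => hnu I hIG fun A hA B hB hAB => by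
      simpa [hAB] using hI hA hB hAB
  have htriangles : (G.powersetCard 3).filter (fun S =>
      ∀ A ∈ S, ∀ B ∈ S, A ≠ B → t₁ ≤ (A ∩ B).card) =
      (intersectionGraph t₁).cliqueFinsetOn G 3 := by
    ext S
    simp only [mem_filter, mem_powersetCard, SimpleGraph.mem_cliqueFinsetOn,
      SimpleGraph.isNClique_iff, SimpleGraph.isClique_iff, Set.Pairwise, mem_coe]
    exact ⟨fun ⟨⟨hSG, hS3⟩, hS⟩ => ⟨hSG, fun A hA B hB hAB => ⟨hAB, hS A hA B hB hAB⟩, hS3⟩,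
      fun ⟨hSG, hS, hS3⟩ => ⟨⟨hSG, hS3⟩, fun A hA B hB hAB => (hS hA hB hAB).2⟩⟩
  have hneighbors (A : Finset ℕ) : G.filter (fun B => B ≠ A ∧ t₁ ≤ (A ∩ B).card) =
      {B ∈ G | (intersectionGraph t₁).Adj A B} :=
    filter_congr fun B _ => and_congr_left' ne_comm
  simp only [hneighbors, htriangles]
  exact SimpleGraph.mul_sum_c2_le_card_cliqueFinsetOn_three hind

theorem stmt7 (t₁ s : ℕ) (ht : 1 ≤ t₁) (hs : 1 ≤ s) (G : Finset (Finset ℕ))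
    (hnu : ∀ H ⊆ G,
      (∀ A ∈ H, ∀ B ∈ H, A ≠ B → (A ∩ B).card < t₁) → H.card ≤ s) :
    ((s : ℝ) / 3) *
        ∑ A ∈ G, c2 (((G.filter fun B => B ≠ A ∧ t₁ ≤ (A ∩ B).card).card : ℝ) / s) ≤
      (((G.powersetCard 3).filter fun S =>
          ∀ A ∈ S, ∀ B ∈ S, A ≠ B → t₁ ≤ (A ∩ B).card).card : ℝ) :=
  stmt7_general t₁ s G hnu
end

section
/- Let F ⊆ {F ⊆ [n] : |F| = k} with ν(F, k-1) ≤ s, and suppose G = {A_1,...,A_m} ⊆ F is an inclusion-maximal (m, k-1)-sunflower with m ≥ 2s+1 (i.e., the A_i are k-sets whose pairwise intersections all equal a common (k-1)-set X, and no further set of F can be added preserving this). Then ν(F \ G, k-1) ≤ s - 1. -/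
/-!
Let `H ⊆ F \ G` have pairwise intersections of size at most `k - 2`, and write every petal as
`insert x X`. A set `B ∈ H` does not contain the core `X`, so a petal `insert x X` meets `B` in
`k - 1` points only if `x ∈ B \ X` and `|X ∩ B| = k - 2`; then `|B \ X| = 2`, so `B` meets at
most two petals in `k - 1` points. Since `2|H| ≤ 2s < m`, some petal meets every set of `H` in at most
`k - 2` points, and it can be added to `H`. Hence `|H| + 1 ≤ s`.
-/

open Finset

section Pigeonhole

variable {β γ : Type*} [DecidableEq β]

theorem exists_mem_forall_of_card_filter_not_le (r : β → γ → Prop) [∀ a b, Decidable (r a b)]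
    {G : Finset β} {H : Finset γ} {c : ℕ} (hc : ∀ B ∈ H, #(G.filter fun A => ¬ r A B) ≤ c)
    (hlt : #H * c < #G) : ∃ A ∈ G, ∀ B ∈ H, r A B := by
  obtain ⟨A, hAG, hA⟩ := exists_mem_notMem_of_card_lt_card
    ((card_biUnion_le_card_mul H (fun B => G.filter fun A => ¬ r A B) c hc).trans_lt hlt)
  refine ⟨A, hAG, fun B hB => ?_⟩
  by_contra hAB
  exact hA (mem_biUnion.2 ⟨B, hB, mem_filter.2 ⟨hAG, hAB⟩⟩)

end Pigeonhole

section Sunflower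

variable {α : Type*} [DecidableEq α] {X A B : Finset α} {x : α}

theorem subset_of_forall_inter_eq {G : Finset (Finset α)} (hG : 1 < #G)
    (hcore : ∀ A ∈ G, ∀ B ∈ G, A ≠ B → A ∩ B = X) (hA : A ∈ G) : X ⊆ A := by
  obtain ⟨A', hA', hne⟩ := exists_mem_ne hG A
  rw [← hcore A' hA' A hA hne]
  exact inter_subset_right

theorem card_inter_lt_of_not_subset (hXB : ¬ X ⊆ B) : #(X ∩ B) < #X :=
  card_lt_card (inter_subset_left.ssubset_of_ne fun h => hXB (h ▸ inter_subset_right))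

theorem mem_sdiff_of_card_le_card_insert_inter (hXB : ¬ X ⊆ B)
    (h : #X ≤ #(insert x X ∩ B)) : x ∈ B \ X := by
  have hlt := card_inter_lt_of_not_subset hXB
  refine mem_sdiff.2 ⟨by_contra fun hxB => ?_, fun hxX => ?_⟩
  · rw [insert_inter_of_notMem hxB] at h
    omega
  · rw [insert_eq_of_mem hxX] at h
    omega

theorem card_sdiff_le_two_of_card_le_card_insert_inter (hB : #B = #X + 1)
    (h : #X ≤ #(insert x X ∩ B)) : #(B \ X) ≤ 2 := by
  have hins : #(insert x X ∩ B) ≤ #(X ∩ B) + 1 := by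
    by_cases hxB : x ∈ B
    · rw [insert_inter_of_mem hxB]
      exact card_insert_le _ _
    · rw [insert_inter_of_notMem hxB]
      omega
  rw [card_sdiff]
  omega

theorem card_filter_card_le_card_inter_le_two {G : Finset (Finset α)}
    (hG : ∀ A ∈ G, ∃ x ∉ X, insert x X = A) (hB : #B = #X + 1) (hXB : ¬ X ⊆ B) :
    #(G.filter fun A => #X ≤ #(A ∩ B)) ≤ 2 := by
  obtain hempty | ⟨A₀, hA₀⟩ := (G.filter fun A => #X ≤ #(A ∩ B)).eq_empty_or_nonempty
  · simp [hempty]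
  have hpetals : G.filter (fun A => #X ≤ #(A ∩ B)) ⊆ (B \ X).image (insert · X) := by
    intro A hA
    obtain ⟨hAG, hAB⟩ := mem_filter.1 hA
    obtain ⟨x, -, rfl⟩ := hG A hAG
    exact mem_image_of_mem _ (mem_sdiff_of_card_le_card_insert_inter hXB hAB)
  obtain ⟨hA₀G, hA₀B⟩ := mem_filter.1 hA₀
  obtain ⟨x₀, -, rfl⟩ := hG A₀ hA₀G
  calc #(G.filter fun A => #X ≤ #(A ∩ B))
      ≤ #((B \ X).image (insert · X)) := card_le_card hpetals
    _ ≤ #(B \ X) := card_image_le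
    _ ≤ 2 := card_sdiff_le_two_of_card_le_card_insert_inter hB hA₀B

end Sunflower

theorem stmt13 (n k s m : ℕ) (hk : 2 ≤ k) (hs : 1 ≤ s) (hm : 2 * s + 1 ≤ m)
    (F : Finset (Finset ℕ)) (hF : ∀ A ∈ F, A ⊆ Finset.range n ∧ A.card = k)
    (hnu : ∀ G ⊆ F,
      (∀ A ∈ G, ∀ B ∈ G, A ≠ B → (A ∩ B).card ≤ k - 2) → G.card ≤ s)
    (G : Finset (Finset ℕ)) (hGF : G ⊆ F) (hGc : G.card = m)
    (X : Finset ℕ) (hX : X.card = k - 1)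
    (hcore : ∀ A ∈ G, ∀ B ∈ G, A ≠ B → A ∩ B = X)
    (hmaxG : ∀ B ∈ F, B ∉ G → ¬ X ⊆ B) :
    ∀ H ⊆ F \ G,
      (∀ A ∈ H, ∀ B ∈ H, A ≠ B → (A ∩ B).card ≤ k - 2) → H.card ≤ s - 1 := by
  intro H hHFG hH
  have hHF : H ⊆ F := hHFG.trans sdiff_subset
  have hHs := hnu H hHF hH
  have hpetal : ∀ A ∈ G, ∃ x ∉ X, insert x X = A := fun A hA =>
    exists_eq_insert_iff.2 ⟨subset_of_forall_inter_eq (by omega) hcore hA, by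
      rw [(hF A (hGF hA)).2]; omega⟩
  have hblocked : ∀ B ∈ H, #(G.filter fun A => ¬ #(A ∩ B) ≤ k - 2) ≤ 2 := by
    intro B hB
    obtain ⟨hBF, hBG⟩ := mem_sdiff.1 (hHFG hB)
    refine (card_le_card (monotone_filter_right G fun A _ h => ?_)).trans
      (card_filter_card_le_card_inter_le_two hpetal ?_ (hmaxG B hBF hBG))
    · omega
    · rw [(hF B hBF).2]; omega
  obtain ⟨A, hAG, hAH⟩ :=
    exists_mem_forall_of_card_filter_not_le _ hblocked (by rw [hGc]; omega)
  have hAnH : A ∉ H := fun h => (mem_sdiff.1 (hHFG h)).2 hAG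
  have hHA : ((insert A H : Finset (Finset ℕ)) : Set (Finset ℕ)).Pairwise
      fun A B => #(A ∩ B) ≤ k - 2 := by
    rw [coe_insert]
    exact Set.Pairwise.insert_of_notMem hAnH (fun C hC D hD => hH C hC D hD)
      fun B hB => ⟨hAH B hB, inter_comm A B ▸ hAH B hB⟩
  have := hnu (insert A H) (insert_subset (hGF hAG) hHF) fun C hC D hD => hHA hC hD
  rw [card_insert_of_notMem hAnH] at this
  omega
end

section
/- Suppose p_1, ..., p_{s+1} are positive reals with Σ p_i ≤ 1/2, and Q_1, ..., Q_{s+1} are upward-closed families of subsets of [n] with μ_{p_i}(Q_i) ≥ 3(s+1)p_i for each i, where μ_p is the p-biased product measure. Then there exist pairwise disjoint sets Q_1 ∈ Q_1, ..., Q_{s+1} ∈ Q_{s+1}. -/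
/-!
Induct on `n` under the stronger hypothesis `RainbowCondition`,
`p j * (1 + 2 * ∑_{l ≠ j} (1 - μ l)) < μ j`, which `μ i ≥ 3 (s + 1) p i` implies.
Split every `Q l` at the last coordinate `n` into its sets avoiding `n` and the link of `n`,
of measures `a l ≤ b l`, so that `μ l = (1 - p l) a l + p l b l`. Hand `n` to a family `i` with the
largest gain `b i - a i`: replacing `Q i` by its link and every other `Q l` by its part avoiding `n`
preserves the condition (this is where `∑ p ≤ 1/2` enters), and a rainbow matching of the new
families becomes one of the old families once `n` is added to the `i`-th set. For `n = 0` the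
condition forces `μ j > 0`, that is `∅ ∈ Q j`, for every `j`.
-/

open Finset Function

def biasedMeasure (p : ℝ) (n : ℕ) (Q : Finset (Finset ℕ)) : ℝ :=
  ∑ A ∈ Q, p ^ A.card * (1 - p) ^ (n - A.card)

structure IsUpFamily (n : ℕ) (Q : Finset (Finset ℕ)) : Prop where
  subset_range : ∀ A ∈ Q, A ⊆ range n
  mem_of_subset : ∀ A ∈ Q, ∀ B, A ⊆ B → B ⊆ range n → B ∈ Q

lemma subset_range_of_subset_range_succ {A : Finset ℕ} {n : ℕ} (h : A ⊆ range (n + 1))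
    (hn : n ∉ A) : A ⊆ range n := by
  rwa [range_add_one, subset_insert_iff_of_notMem hn] at h

namespace IsUpFamily

variable {n : ℕ} {Q : Finset (Finset ℕ)}

lemma nonMemberSubfamily (hQ : IsUpFamily (n + 1) Q) :
    IsUpFamily n (Q.nonMemberSubfamily n) where
  subset_range A hA := by
    rw [mem_nonMemberSubfamily] at hA
    exact subset_range_of_subset_range_succ (hQ.subset_range A hA.1) hA.2
  mem_of_subset A hA B hAB hB := by
    rw [mem_nonMemberSubfamily] at hA ⊢
    refine ⟨hQ.mem_of_subset A hA.1 B hAB (hB.trans (range_subset_range.2 n.le_succ)), ?_⟩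
    simpa using @hB n

lemma memberSubfamily (hQ : IsUpFamily (n + 1) Q) :
    IsUpFamily n (Q.memberSubfamily n) where
  subset_range A hA := by
    rw [mem_memberSubfamily] at hA
    exact subset_range_of_subset_range_succ
      ((subset_insert n A).trans (hQ.subset_range _ hA.1)) hA.2
  mem_of_subset A hA B hAB hB := by
    rw [mem_memberSubfamily] at hA ⊢
    refine ⟨hQ.mem_of_subset _ hA.1 _ (insert_subset_insert n hAB) ?_, by simpa using @hB n⟩
    rw [range_add_one]
    exact insert_subset_insert n hB

lemma nonMemberSubfamily_subset_memberSubfamily (hQ : IsUpFamily (n + 1) Q) :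
    Q.nonMemberSubfamily n ⊆ Q.memberSubfamily n := by
  intro A hA
  have hA' : A ⊆ range n := hQ.nonMemberSubfamily.subset_range A hA
  rw [mem_nonMemberSubfamily] at hA
  refine mem_memberSubfamily.2 ⟨hQ.mem_of_subset A hA.1 _ (subset_insert n A) ?_, hA.2⟩
  rw [range_add_one]
  exact insert_subset_insert n hA'

lemma empty_mem (hQ : IsUpFamily 0 Q) (hne : Q.Nonempty) : ∅ ∈ Q := by
  obtain ⟨A, hA⟩ := hne
  simpa [subset_empty.1 (hQ.subset_range A hA)] using hA

end IsUpFamily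

section biasedMeasure

variable {p : ℝ} {n : ℕ} {Q R : Finset (Finset ℕ)}

lemma biasedMeasure_mono (hp₀ : 0 ≤ p) (hp₁ : p ≤ 1) (h : Q ⊆ R) :
    biasedMeasure p n Q ≤ biasedMeasure p n R :=
  sum_le_sum_of_subset_of_nonneg h fun A _ _ ↦ by
    have : 0 ≤ 1 - p := by linarith
    positivity

lemma biasedMeasure_le_one (hp₀ : 0 ≤ p) (hp₁ : p ≤ 1) (hQ : ∀ A ∈ Q, A ⊆ range n) :
    biasedMeasure p n Q ≤ 1 := by
  calc biasedMeasure p n Q ≤ biasedMeasure p n (range n).powerset :=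
        biasedMeasure_mono hp₀ hp₁ fun A hA ↦ mem_powerset.2 (hQ A hA)
    _ = 1 := by
        simpa only [biasedMeasure, card_range, add_sub_cancel, one_pow] using
          sum_pow_mul_eq_add_pow p (1 - p) (range n)

lemma biasedMeasure_succ (hQ : ∀ A ∈ Q, A ⊆ range (n + 1)) :
    biasedMeasure p (n + 1) Q = (1 - p) * biasedMeasure p n (Q.nonMemberSubfamily n) +
      p * biasedMeasure p n (Q.memberSubfamily n) := by
  have card_le {A : Finset ℕ} (hA : A ⊆ range n) : A.card ≤ n := by
    simpa using card_le_card hA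
  have h_non : ∑ A ∈ Q.nonMemberSubfamily n, p ^ A.card * (1 - p) ^ (n + 1 - A.card) =
      (1 - p) * biasedMeasure p n (Q.nonMemberSubfamily n) := by
    rw [biasedMeasure, mul_sum]
    refine sum_congr rfl fun A hA ↦ ?_
    rw [mem_nonMemberSubfamily] at hA
    have := card_le (subset_range_of_subset_range_succ (hQ A hA.1) hA.2)
    rw [Nat.sub_add_comm this, pow_succ]
    ring
  have h_mem : ∑ A ∈ Q with n ∈ A, p ^ A.card * (1 - p) ^ (n + 1 - A.card) =
      p * biasedMeasure p n (Q.memberSubfamily n) := by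
    rw [← image_insert_memberSubfamily, sum_image, biasedMeasure, mul_sum]
    · refine sum_congr rfl fun A hA ↦ ?_
      rw [mem_memberSubfamily] at hA
      rw [card_insert_of_notMem hA.2, Nat.add_sub_add_right, pow_succ]
      ring
    · exact insert_erase_invOn.2.injOn.mono fun A hA ↦ (mem_memberSubfamily.1 hA).2
  rw [← h_non, ← h_mem, biasedMeasure, ← sum_filter_add_sum_filter_not Q (n ∈ ·), add_comm]
  rfl

end biasedMeasure

section RainbowCondition

variable {ι : Type*} [Fintype ι] [DecidableEq ι]

def RainbowCondition (p μ : ι → ℝ) : Prop :=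
  ∀ j, p j * (1 + 2 * ∑ l ∈ univ.erase j, (1 - μ l)) < μ j

lemma rainbowCondition_iff {p μ : ι → ℝ} :
    RainbowCondition p μ ↔ ∀ j, p j * (1 + 2 * (∑ l, (1 - μ l) - (1 - μ j))) < μ j := by
  simp only [RainbowCondition, sum_erase_eq_sub (mem_univ _)]

lemma rainbowCondition_of_lt {p μ : ι → ℝ} (hp : ∀ i, 0 ≤ p i)
    (h : ∀ i, (2 * Fintype.card ι - 1) * p i < μ i) : RainbowCondition p μ := by
  intro j
  have hcard : (1 : ℝ) ≤ Fintype.card ι := by exact_mod_cast Fintype.card_pos_iff.2 ⟨j⟩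
  have hμ (l : ι) : 0 ≤ μ l := by nlinarith [h l, hp l]
  have hsum : ∑ l ∈ univ.erase j, (1 - μ l) ≤ Fintype.card ι - 1 := by
    calc ∑ l ∈ univ.erase j, (1 - μ l) ≤ ∑ l ∈ univ.erase j, (1 : ℝ) :=
          sum_le_sum fun l _ ↦ by linarith [hμ l]
      _ = Fintype.card ι - 1 := by simp [Nat.cast_pred (Fintype.card_pos_iff.2 ⟨j⟩)]
  calc p j * (1 + 2 * ∑ l ∈ univ.erase j, (1 - μ l)) ≤ p j * (2 * Fintype.card ι - 1) :=
        mul_le_mul_of_nonneg_left (by linarith) (hp j)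
    _ < μ j := by linarith [h j]

lemma RainbowCondition.pos {p μ : ι → ℝ} (hp : ∀ i, 0 ≤ p i) (hμ : ∀ i, μ i ≤ 1)
    (h : RainbowCondition p μ) (j : ι) : 0 < μ j := by
  have : 0 ≤ ∑ l ∈ univ.erase j, (1 - μ l) := sum_nonneg fun l _ ↦ sub_nonneg.2 (hμ l)
  exact (mul_nonneg (hp j) (by linarith)).trans_lt (h j)

lemma RainbowCondition.update {p a b : ι → ℝ} (hp : ∀ l, 0 ≤ p l) (hpsum : ∑ l, p l ≤ 1 / 2)
    {i : ι} (hab : a i ≤ b i) (hmax : ∀ l, b l - a l ≤ b i - a i)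
    (h : RainbowCondition p fun l ↦ (1 - p l) * a l + p l * b l) :
    RainbowCondition p (Function.update a i (b i)) := by
  set δ : ι → ℝ := fun l ↦ b l - a l with hδ
  have htotal : ∑ l, (1 - Function.update a i (b i) l) =
      ∑ l, (1 - ((1 - p l) * a l + p l * b l)) + ∑ l, p l * δ l - δ i := by
    have hdiff (l : ι) : 1 - Function.update a i (b i) l =
        1 - ((1 - p l) * a l + p l * b l) + (p l * δ l - (Pi.single i (δ i) : ι → ℝ) l) := by
      rcases eq_or_ne l i with rfl | hli
      · simp only [update_self, Pi.single_eq_same, hδ]; ring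
      · simp only [update_of_ne hli, Pi.single_eq_of_ne hli, hδ]; ring
    simp only [hdiff, sum_add_distrib, sum_sub_distrib, sum_pi_single', mem_univ, if_true]
    ring
  have hweighted (j : ι) : ∑ l, p l * δ l ≤ p j * δ j + (1 / 2 - p j) * δ i := by
    have hrest : ∑ l ∈ univ.erase j, p l * δ l ≤ (∑ l, p l - p j) * δ i := by
      rw [← sum_erase_eq_sub (mem_univ j), sum_mul]
      exact sum_le_sum fun l _ ↦ mul_le_mul_of_nonneg_left (hmax l) (hp l)
    have hδi : 0 ≤ δ i := sub_nonneg.2 hab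
    have := mul_le_mul_of_nonneg_right (sub_le_sub_right hpsum (p j)) hδi
    rw [← add_sum_erase _ _ (mem_univ j)]
    linarith
  rw [rainbowCondition_iff] at h ⊢
  intro j
  rw [htotal]
  have hj := h j
  have hδi : 0 ≤ δ i := sub_nonneg.2 hab
  rcases eq_or_ne j i with rfl | hji
  · -- `μ j` grows by `(1 - p j) δ j`, the left side by at most `2 p j (1/2 - p j) δ j`
    have hquad : 0 ≤ (1 - 2 * p j + 2 * p j ^ 2) * δ j :=
      mul_nonneg (by nlinarith [sq_nonneg (p j - 1 / 2)]) hδi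
    rw [update_self]
    linarith [mul_le_mul_of_nonneg_left (hweighted j) (hp j)]
  · rw [update_of_ne hji]
    have hpjδ := mul_le_mul_of_nonneg_left (hmax j) (hp j)
    have hp2δ := mul_nonneg (mul_nonneg (hp j) (hp j)) hδi
    linarith [mul_le_mul_of_nonneg_left (hweighted j) (hp j)]

end RainbowCondition

def IsRainbowMatching {ι α : Type*} (Q : ι → Finset (Finset α)) (f : ι → Finset α) : Prop :=
  (∀ i, f i ∈ Q i) ∧ Pairwise (Disjoint on f)

lemma IsRainbowMatching.of_update_subfamily {ι α : Type*} [DecidableEq ι] [DecidableEq α]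
    {Q : ι → Finset (Finset α)} {a : α} {i : ι} {f : ι → Finset α}
    (hf : IsRainbowMatching
      (update (fun l ↦ (Q l).nonMemberSubfamily a) i ((Q i).memberSubfamily a)) f) :
    IsRainbowMatching Q (update f i (insert a (f i))) := by
  have hmem (l : ι) : update f i (insert a (f i)) l ∈ Q l ∧ a ∉ f l := by
    have := hf.1 l
    rcases eq_or_ne l i with rfl | hli
    · simpa only [update_self, mem_memberSubfamily] using this
    · simpa only [update_of_ne hli, mem_nonMemberSubfamily] using this
  refine ⟨fun l ↦ (hmem l).1, fun l k hlk ↦ ?_⟩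
  have hfd := hf.2 hlk
  rcases eq_or_ne l i with rfl | hli
  · rw [Function.onFun, update_self, update_of_ne hlk.symm]
    exact disjoint_insert_left.2 ⟨(hmem k).2, hfd⟩
  rcases eq_or_ne k i with rfl | hki
  · rw [Function.onFun, update_self, update_of_ne hlk]
    exact disjoint_insert_right.2 ⟨(hmem l).2, hfd⟩
  · rwa [Function.onFun, update_of_ne hli, update_of_ne hki]

theorem exists_isRainbowMatching_of_rainbowCondition {ι : Type*} [Fintype ι] [DecidableEq ι]
    {p : ι → ℝ} (hp : ∀ i, 0 ≤ p i) (hpsum : ∑ i, p i ≤ 1 / 2) {n : ℕ}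
    {Q : ι → Finset (Finset ℕ)} (hQ : ∀ i, IsUpFamily n (Q i))
    (h : RainbowCondition p fun i ↦ biasedMeasure (p i) n (Q i)) :
    ∃ f, IsRainbowMatching Q f := by
  have hp₁ (i : ι) : p i ≤ 1 := by
    have := single_le_sum (fun j _ ↦ hp j) (mem_univ i)
    linarith
  induction n generalizing Q with
  | zero =>
    have hpos := h.pos hp fun i ↦ biasedMeasure_le_one (hp i) (hp₁ i) (hQ i).subset_range
    refine ⟨fun _ ↦ ∅, fun i ↦ (hQ i).empty_mem ?_, fun _ _ _ ↦ disjoint_bot_left⟩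
    exact nonempty_of_sum_ne_zero (hpos i).ne'
  | succ n ih =>
    rcases isEmpty_or_nonempty ι with hι | hι
    · exact ⟨isEmptyElim, isEmptyElim, fun l ↦ isEmptyElim l⟩
    set a : ι → ℝ := fun l ↦ biasedMeasure (p l) n ((Q l).nonMemberSubfamily n)
    set b : ι → ℝ := fun l ↦ biasedMeasure (p l) n ((Q l).memberSubfamily n)
    obtain ⟨i, -, hi⟩ := exists_max_image univ (fun l ↦ b l - a l) univ_nonempty
    have hsucc : (fun l ↦ biasedMeasure (p l) (n + 1) (Q l)) =
        fun l ↦ (1 - p l) * a l + p l * b l :=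
      funext fun l ↦ biasedMeasure_succ (hQ l).subset_range
    have hab : a i ≤ b i := biasedMeasure_mono (hp i) (hp₁ i)
      (hQ i).nonMemberSubfamily_subset_memberSubfamily
    rw [hsucc] at h
    obtain ⟨f, hf⟩ := ih
      (Q := update (fun l ↦ (Q l).nonMemberSubfamily n) i ((Q i).memberSubfamily n))
      (fun l ↦ by
        rcases eq_or_ne l i with rfl | hli
        · rw [update_self]; exact (hQ l).memberSubfamily
        · rw [update_of_ne hli]; exact (hQ l).nonMemberSubfamily)
      (by
        convert h.update hp hpsum hab fun l ↦ hi l (mem_univ l) using 1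
        exact funext fun l ↦ apply_update (fun l ↦ biasedMeasure (p l) n) _ i _ l)
    exact ⟨_, hf.of_update_subfamily⟩

theorem stmt16 (n s : ℕ) (p : Fin (s + 1) → ℝ) (hp : ∀ i, 0 < p i)
    (hpsum : ∑ i, p i ≤ 1 / 2)
    (Q : Fin (s + 1) → Finset (Finset ℕ))
    (hQsub : ∀ i, ∀ A ∈ Q i, A ⊆ Finset.range n)
    (hup : ∀ i, ∀ A ∈ Q i, ∀ B : Finset ℕ, A ⊆ B → B ⊆ Finset.range n → B ∈ Q i)
    (hmu : ∀ i, 3 * ((s : ℝ) + 1) * p i ≤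
      ∑ A ∈ Q i, p i ^ A.card * (1 - p i) ^ (n - A.card)) :
    ∃ f : Fin (s + 1) → Finset ℕ, (∀ i, f i ∈ Q i) ∧
      ∀ i j, i ≠ j → Disjoint (f i) (f j) := by
  have hcond : RainbowCondition p fun i ↦ biasedMeasure (p i) n (Q i) := by
    refine rainbowCondition_of_lt (fun i ↦ (hp i).le) fun i ↦ ?_
    have hμ : 3 * ((s : ℝ) + 1) * p i ≤ biasedMeasure (p i) n (Q i) := hmu i
    have : 0 < ((s : ℝ) + 2) * p i := mul_pos (by positivity) (hp i)
    rw [Fintype.card_fin]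
    push_cast
    linarith
  obtain ⟨f, hfQ, hf⟩ := exists_isRainbowMatching_of_rainbowCondition (fun i ↦ (hp i).le)
    hpsum (fun i ↦ ⟨hQsub i, hup i⟩) hcond
  exact ⟨f, hfQ, fun i j hij ↦ hf hij⟩
end
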